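/- Key-guessing eavesdropper attack: Let 𝒳, 𝒲, 𝒵 be finite alphabets, d_L : 𝒳×𝒲 → [0,∞), d_E : 𝒳×𝒵 → [0,∞) distortion measures such that for every w ∈ 𝒲^n there exists z ∈ 𝒵^n with d_E(x,z) ≤ d_L(x,w) for all x ∈ 𝒳^n, and let 0 ≤ Dc ≤ D. Let 𝒴 be a finite set, k ≥ 0, f : 𝒳^n × {0,1}^k → 𝒴 any encoder, φ : 𝒴 × {0,1}^k → 𝒲^n any decoder, X any 𝒳^n-valued random variable, and U uniform on {0,1}^k independent of X. Then there exists an eavesdropper σ : 𝒴 → 𝒵^n such that P[ d_E(X, σ(f(X,U))) ≤ D ] ≥ 2^{−k} · P[ d_L(X, φ(f(X,U), U)) ≤ Dc ]. -/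

import Mathlib

/-!
Eve guesses the key: for a guess `v` she decodes the public message `y` as Bob would with key
`v` and replaces the reconstruction `w` by a sequence `Z w` that is at least as close to every
source sequence under `d_E` as `w` is under `d_L`. Whenever `U = v` and Bob meets distortion
`Dc`, Eve meets `D`. Averaged over `v`, this event has probability `2^{-k} P[Bob succeeds]`,
and some fixed guess does at least as well as the average.
-/

open scoped BigOperators

noncomputable section

open Classical in
/-- Indicator of a proposition, as a real number. -/
def ind (p : Prop) : ℝ := if p then 1 else 0

/-- Average per-letter distortion between sequences. -/
def seqDist {A B : Type*} (d : A → B → ℝ) {n : ℕ} (x : Fin n → A) (z : Fin n → B) : ℝ :=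
  (n : ℝ)⁻¹ * ∑ i, d (x i) (z i)

/-- `p` is a probability distribution on a finite alphabet. -/
def IsDist {A : Type*} [Fintype A] (p : A → ℝ) : Prop :=
  (∀ a, 0 ≤ p a) ∧ ∑ a, p a = 1

open Finset

theorem ind_nonneg (q : Prop) : 0 ≤ ind q := by
  unfold ind
  split <;> norm_num

theorem ind_le_ind {q r : Prop} (h : q → r) : ind q ≤ ind r := by
  unfold ind
  by_cases hq : q
  · simp [hq, h hq]
  · simp only [hq, if_false]
    exact ind_nonneg r

theorem exists_card_inv_mul_sum_le {ι : Type*} [Fintype ι] [Nonempty ι] (g : ι → ℝ) :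
    ∃ i, (Fintype.card ι : ℝ)⁻¹ * ∑ j, g j ≤ g i := by
  have hcard : (Fintype.card ι : ℝ) ≠ 0 := Nat.cast_ne_zero.mpr Fintype.card_ne_zero
  have hsum : ∑ _i : ι, (Fintype.card ι : ℝ)⁻¹ * ∑ j, g j = ∑ j, g j := by
    rw [sum_const, card_univ, nsmul_eq_mul, ← mul_assoc, mul_inv_cancel₀ hcard, one_mul]
  obtain ⟨i, -, hi⟩ := exists_le_of_sum_le univ_nonempty hsum.le
  exact ⟨i, hi⟩

section KeyGuessing

variable {𝓧 𝓦 𝓩 𝓨 K : Type*} [Fintype 𝓧] [Fintype K] {n : ℕ}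
  {dL : 𝓧 → 𝓦 → ℝ} {dE : 𝓧 → 𝓩 → ℝ} {Z : (Fin n → 𝓦) → (Fin n → 𝓩)} {Dc D : ℝ}
  {f : (Fin n → 𝓧) → K → 𝓨} {φ : 𝓨 → K → (Fin n → 𝓦)} {p : (Fin n → 𝓧) → ℝ}

theorem sum_ind_decode_le_sum_ind_guess (hp : ∀ x, 0 ≤ p x)
    (hZ : ∀ w x, seqDist dE x (Z w) ≤ seqDist dL x w) (hD : Dc ≤ D) (v : K) :
    ∑ x, p x * ind (seqDist dL x (φ (f x v) v) ≤ Dc)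
      ≤ ∑ u, ∑ x, p x * ind (seqDist dE x (Z (φ (f x u) v)) ≤ D) :=
  calc ∑ x, p x * ind (seqDist dL x (φ (f x v) v) ≤ Dc)
      ≤ ∑ x, p x * ind (seqDist dE x (Z (φ (f x v) v)) ≤ D) :=
        sum_le_sum fun x _ => mul_le_mul_of_nonneg_left
          (ind_le_ind fun h => (hZ _ x).trans (h.trans hD)) (hp x)
    _ ≤ ∑ u, ∑ x, p x * ind (seqDist dE x (Z (φ (f x u) v)) ≤ D) :=
        single_le_sum (f := fun u => ∑ x, p x * ind (seqDist dE x (Z (φ (f x u) v)) ≤ D))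
          (fun _ _ => sum_nonneg fun x _ => mul_nonneg (hp x) (ind_nonneg _)) (mem_univ v)

theorem exists_key_guess [Nonempty K] (hp : ∀ x, 0 ≤ p x)
    (hZ : ∀ w x, seqDist dE x (Z w) ≤ seqDist dL x w) (hD : Dc ≤ D) :
    ∃ v : K, (Fintype.card K : ℝ)⁻¹ *
        ((Fintype.card K : ℝ)⁻¹ * ∑ u, ∑ x, p x * ind (seqDist dL x (φ (f x u) u) ≤ Dc))
      ≤ (Fintype.card K : ℝ)⁻¹ * ∑ u, ∑ x, p x * ind (seqDist dE x (Z (φ (f x u) v)) ≤ D) := by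
  obtain ⟨v, hv⟩ := exists_card_inv_mul_sum_le fun v : K =>
    (Fintype.card K : ℝ)⁻¹ * ∑ u, ∑ x, p x * ind (seqDist dE x (Z (φ (f x u) v)) ≤ D)
  refine ⟨v, le_trans (mul_le_mul_of_nonneg_left ?_ (by positivity)) hv⟩
  rw [mul_sum]
  exact sum_le_sum fun v _ => mul_le_mul_of_nonneg_left
    (sum_ind_decode_le_sum_ind_guess hp hZ hD v) (by positivity)

end KeyGuessing

theorem key_guessing_attack_general
    {𝓧 𝓦 𝓩 : Type*} [Fintype 𝓧] {n : ℕ}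
    (dL : 𝓧 → 𝓦 → ℝ) (dE : 𝓧 → 𝓩 → ℝ)
    (hlenient : ∀ w : Fin n → 𝓦, ∃ z : Fin n → 𝓩, ∀ x : Fin n → 𝓧,
      seqDist dE x z ≤ seqDist dL x w)
    (Dc D : ℝ) (hD : Dc ≤ D)
    (𝓨 : Type*) (k : ℕ)
    (f : (Fin n → 𝓧) → (Fin k → Bool) → 𝓨)
    (φ : 𝓨 → (Fin k → Bool) → (Fin n → 𝓦))
    (p : (Fin n → 𝓧) → ℝ) (hp : IsDist p) :
    ∃ σ : 𝓨 → (Fin n → 𝓩),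
      ((2 : ℝ) ^ k)⁻¹ *
          (((2 : ℝ) ^ k)⁻¹ * ∑ u : Fin k → Bool, ∑ x : Fin n → 𝓧,
            p x * ind (seqDist dL x (φ (f x u) u) ≤ Dc))
        ≤ ((2 : ℝ) ^ k)⁻¹ * ∑ u : Fin k → Bool, ∑ x : Fin n → 𝓧,
            p x * ind (seqDist dE x (σ (f x u)) ≤ D) := by
  choose Z hZ using hlenient
  obtain ⟨v, hv⟩ := exists_key_guess (f := f) (φ := φ) hp.1 hZ hD
  refine ⟨fun y => Z (φ y v), ?_⟩
  simpa only [Fintype.card_fun, Fintype.card_bool, Fintype.card_fin, Nat.cast_pow,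
    Nat.cast_ofNat] using hv

/-- **Key-guessing eavesdropper attack.** If `d_E` is more lenient than `d_L` at blocklength
`n` and `Dc ≤ D`, then for any encoder `f`, decoder `φ`, source `X` and an independent uniform
key `U` of `k` bits, there is an eavesdropper `σ` with
`P[d_E(X,σ(f(X,U))) ≤ D] ≥ 2^{−k}·P[d_L(X,φ(f(X,U),U)) ≤ Dc]`. -/
theorem key_guessing_attack
    {𝓧 𝓦 𝓩 : Type*} [Fintype 𝓧] [Fintype 𝓦] [Fintype 𝓩] {n : ℕ}
    (dL : 𝓧 → 𝓦 → ℝ) (dE : 𝓧 → 𝓩 → ℝ)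
    (hlenient : ∀ w : Fin n → 𝓦, ∃ z : Fin n → 𝓩, ∀ x : Fin n → 𝓧,
      seqDist dE x z ≤ seqDist dL x w)
    (Dc D : ℝ) (hDc : 0 ≤ Dc) (hD : Dc ≤ D)
    (𝓨 : Type*) [Fintype 𝓨] (k : ℕ)
    (f : (Fin n → 𝓧) → (Fin k → Bool) → 𝓨)
    (φ : 𝓨 → (Fin k → Bool) → (Fin n → 𝓦))
    (p : (Fin n → 𝓧) → ℝ) (hp : IsDist p) :
    ∃ σ : 𝓨 → (Fin n → 𝓩),
      ((2 : ℝ) ^ k)⁻¹ *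
          (((2 : ℝ) ^ k)⁻¹ * ∑ u : Fin k → Bool, ∑ x : Fin n → 𝓧,
            p x * ind (seqDist dL x (φ (f x u) u) ≤ Dc))
        ≤ ((2 : ℝ) ^ k)⁻¹ * ∑ u : Fin k → Bool, ∑ x : Fin n → 𝓧,
            p x * ind (seqDist dE x (σ (f x u)) ≤ D) :=
  key_guessing_attack_general dL dE hlenient Dc D hD 𝓨 k f φ p hp

end
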